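/- Let G be a simple graph, C a longest cycle in G with a fixed orientation, H a component of G − V(C), and let u, v be distinct vertices of C each having a neighbor in H such that the union of their neighborhoods in H has at least 2 vertices. Then none of the edges u⁺²v⁺, u⁺v⁺², u⁻²v⁻, u⁻v⁻² lies in E(G); in particular u⁺² ≠ v and u⁻² ≠ v⁻. -/

import Mathlib

open SimpleGraph

def IsCycleEmb {V : Type*} (G : SimpleGraph V) (n : ℕ) (f : ZMod n → V) : Prop :=
  3 ≤ n ∧ Function.Injective f ∧ ∀ i : ZMod n, G.Adj (f i) (f (i + 1))

def IsLongestCycle {V : Type*} (G : SimpleGraph V) (n : ℕ) (f : ZMod n → V) : Prop :=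
  IsCycleEmb G n f ∧ ∀ (m : ℕ) (g : ZMod m → V), IsCycleEmb G m g → m ≤ n

def IsDominatingCycle {V : Type*} (G : SimpleGraph V) (n : ℕ) (f : ZMod n → V) : Prop :=
  IsCycleEmb G n f ∧ ∀ a b : V, G.Adj a b → a ∈ Set.range f ∨ b ∈ Set.range f

def IsCompOutside {V : Type*} (G : SimpleGraph V) (C : Set V) (H : Set V) : Prop :=
  H.Nonempty ∧ Disjoint H C ∧ (G.induce H).Connected ∧
    ∀ a ∈ H, ∀ b : V, G.Adj a b → b ∉ C → b ∈ H

def TwoConnected {V : Type*} (G : SimpleGraph V) : Prop :=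
  3 ≤ Nat.card V ∧ ∀ v : V, (G.induce ({v}ᶜ : Set V)).Connected

def KConnected {V : Type*} (G : SimpleGraph V) (k : ℕ) : Prop :=
  k < Nat.card V ∧ ∀ S : Set V, S.ncard < k → (G.induce (Sᶜ : Set V)).Connected

def HFree {W V : Type*} (H : SimpleGraph W) (G : SimpleGraph V) : Prop :=
  ¬ Nonempty (H ↪g G)

def IsCompleteMultipartite {V : Type*} (G : SimpleGraph V) : Prop :=
  ∃ s : Setoid V, ∀ a b : V, G.Adj a b ↔ ¬ s.r a b

/-- `W = K₁ + 3K₂`: vertex 0 joined to three disjoint edges 12, 34, 56. -/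
def Wgraph : SimpleGraph (Fin 7) :=
  SimpleGraph.fromRel (fun a b =>
    a = 0 ∨ (a = 1 ∧ b = 2) ∨ (a = 3 ∧ b = 4) ∨ (a = 5 ∧ b = 6))

/-- `Z₁`, the paw: triangle 012 plus pendant edge 23. -/
def pawGraph : SimpleGraph (Fin 4) :=
  SimpleGraph.fromRel (fun a b =>
    (a = 0 ∧ b = 1) ∨ (a = 1 ∧ b = 2) ∨ (a = 0 ∧ b = 2) ∨ (a = 2 ∧ b = 3))

/-- The claw `K₁,₃`. -/
def clawGraph : SimpleGraph (Fin 4) :=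
  SimpleGraph.fromRel (fun a _ => a = 0)

/-- `K₄` minus the edge 23. -/
def K4minusGraph : SimpleGraph (Fin 4) :=
  SimpleGraph.fromRel (fun a b => ¬((a = 2 ∧ b = 3) ∨ (a = 3 ∧ b = 2)))

/-- `K₁,₃**`: spider with legs of lengths 2, 2, 1 (center 0, legs 0-1-2, 0-3-4, 0-5). -/
def spider221 : SimpleGraph (Fin 6) :=
  SimpleGraph.fromRel (fun a b =>
    (a = 0 ∧ b = 1) ∨ (a = 1 ∧ b = 2) ∨ (a = 0 ∧ b = 3) ∨ (a = 3 ∧ b = 4) ∨ (a = 0 ∧ b = 5))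

/-- The theta graph `A_s`: two vertices joined by three internally disjoint paths,
each with `s` internal vertices. -/
def thetaGraph (s : ℕ) : SimpleGraph (Fin 2 ⊕ Fin 3 × Fin s) :=
  SimpleGraph.fromRel (fun a b =>
    (∃ (j : Fin 3) (k : Fin s), a = Sum.inl 0 ∧ b = Sum.inr (j, k) ∧ (k : ℕ) = 0) ∨
    (∃ (j : Fin 3) (k : Fin s), a = Sum.inl 1 ∧ b = Sum.inr (j, k) ∧ (k : ℕ) = s - 1) ∨
    (∃ (j : Fin 3) (k l : Fin s), a = Sum.inr (j, k) ∧ b = Sum.inr (j, l) ∧ (l : ℕ) = (k : ℕ) + 1))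

/-- `A′_s = 2K₁ + sK₂`. -/
def APrime (s : ℕ) : SimpleGraph (Fin 2 ⊕ Fin s × Fin 2) :=
  SimpleGraph.fromRel (fun a b =>
    (∃ (i : Fin 2) (x : Fin s × Fin 2), a = Sum.inl i ∧ b = Sum.inr x) ∨
    (∃ j : Fin s, a = Sum.inr (j, 0) ∧ b = Sum.inr (j, 1)))

/-- `A″_s = K₂ + (2K₂ ∪ K_s)`. -/
def ADoublePrime (s : ℕ) : SimpleGraph (Fin 2 ⊕ (Fin 2 × Fin 2 ⊕ Fin s)) :=
  SimpleGraph.fromRel (fun a b =>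
    (∃ i : Fin 2, a = Sum.inl i) ∨
    (∃ j : Fin 2, a = Sum.inr (Sum.inl (j, 0)) ∧ b = Sum.inr (Sum.inl (j, 1))) ∨
    (∃ p q : Fin s, a = Sum.inr (Sum.inr p) ∧ b = Sum.inr (Sum.inr q)))

/-- `A_s⁽¹⁾`: two disjoint triangles joined by three vertex-disjoint paths with `s`
internal vertices each. -/
def AOne (s : ℕ) : SimpleGraph (Fin 2 × Fin 3 ⊕ Fin 3 × Fin s) :=
  SimpleGraph.fromRel (fun a b =>
    (∃ (t : Fin 2) (i j : Fin 3), a = Sum.inl (t, i) ∧ b = Sum.inl (t, j)) ∨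
    (∃ (j : Fin 3) (k : Fin s), a = Sum.inl (0, j) ∧ b = Sum.inr (j, k) ∧ (k : ℕ) = 0) ∨
    (∃ (j : Fin 3) (k : Fin s), a = Sum.inl (1, j) ∧ b = Sum.inr (j, k) ∧ (k : ℕ) = s - 1) ∨
    (∃ (j : Fin 3) (k l : Fin s), a = Sum.inr (j, k) ∧ b = Sum.inr (j, l) ∧ (l : ℕ) = (k : ℕ) + 1))

/-- `A_s⁽⁵⁾`: vertices `x₁, x₂` and `y_{i,j}`; edges `x₁x₂`, `y_{1,j}y_{2,j}`, `x_i y_{i,j}`. -/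
def AFive (s : ℕ) : SimpleGraph (Fin 2 ⊕ Fin 2 × Fin s) :=
  SimpleGraph.fromRel (fun a b =>
    (a = Sum.inl 0 ∧ b = Sum.inl 1) ∨
    (∃ j : Fin s, a = Sum.inr (0, j) ∧ b = Sum.inr (1, j)) ∨
    (∃ (i : Fin 2) (j : Fin s), a = Sum.inl i ∧ b = Sum.inr (i, j)))

/-!
Suppose `u = f i` and `v = f j` have distinct neighbours `a` and `b` in `H`, and let `P` be an
`a`–`b` path inside `H`. An edge `u⁺²v⁺` would close up the cycle
`v⁺ → ⋯ → u → a ⇝ b → v → v⁻ → ⋯ → u⁺² → v⁺`, which drops only `u⁺` from `C` but gains the at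
least two vertices of `P`, so it is longer than `C`. The edge `u⁺v⁺²` is the same configuration
with `u` and `v` exchanged, and the two edges through predecessors are the same configuration on
the reversed cycle. If `u⁺² = v` then `u⁺²v⁺` is an edge of `C`. Finally `u⁻² = v⁻` means
`u = v⁺`, and then `v⁺ → ⋯ → v → b ⇝ a → v⁺` is longer than `C`.
-/

lemma List.two_le_length_of_head?_of_getLast? {α : Type*} {l : List α} {a b : α}
    (ha : l.head? = some a) (hb : l.getLast? = some b) (hab : a ≠ b) : 2 ≤ l.length := by
  match l, ha, hb with
  | [_], ha, hb => simp_all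
  | _ :: _ :: _, _, _ => simp

lemma SimpleGraph.Preconnected.exists_chain_induce {V : Type*} {G : SimpleGraph V} {H : Set V}
    (hconn : (G.induce H).Preconnected) {a b : V} (ha : a ∈ H) (hb : b ∈ H) :
    ∃ P : List V, P.Nodup ∧ P.IsChain G.Adj ∧ (∀ x ∈ P, x ∈ H) ∧
      P.head? = some a ∧ P.getLast? = some b := by
  classical
  obtain ⟨w⟩ := hconn ⟨a, ha⟩ ⟨b, hb⟩
  let p := w.toPath.val.map (Embedding.induce H).toHom
  refine ⟨p.support, (w.toPath.2.map Subtype.val_injective).support_nodup,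
    p.isChain_adj_support, ?_, ?_, ?_⟩
  · intro x hx
    obtain ⟨y, -, rfl⟩ := List.mem_map.mp (Walk.support_map _ _ ▸ hx)
    exact y.2
  · rw [← Walk.cons_tail_support, List.head?_cons]
    rfl
  · rw [List.getLast?_eq_some_getLast p.support_ne_nil, Walk.getLast_support]
    rfl

lemma Set.exists_ne_of_two_le_ncard_union {α : Type*} {s t : Set α} (hs : s.Nonempty)
    (ht : t.Nonempty) (h2 : 2 ≤ (s ∪ t).ncard) : ∃ a ∈ s, ∃ b ∈ t, a ≠ b := by
  by_contra! hall
  obtain ⟨a, ha⟩ := hs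
  obtain ⟨b, hb⟩ := ht
  have hsub : s ∪ t ⊆ {b} := by
    rintro x (hx | hx)
    · exact hall x hx b hb
    · exact (hall a ha x hx).symm.trans (hall a ha b hb)
  have := Set.ncard_le_ncard hsub (Set.finite_singleton b)
  rw [Set.ncard_singleton] at this
  omega

lemma ZMod.natCast_eq_neg_of_add_eq {n a b : ℕ} (h : a + b = n) :
    (a : ZMod n) = -(b : ZMod n) := by
  rw [eq_neg_iff_add_eq_zero, ← Nat.cast_add, h, ZMod.natCast_self]

lemma ZMod.exists_eq_add_two_add {n : ℕ} [NeZero n] {i j : ZMod n} (h₀ : j ≠ i)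
    (h₁ : j ≠ i + 1) : ∃ e m : ℕ, j = i + 2 + e ∧ e + m + 3 = n := by
  obtain ⟨d, hdn, hd⟩ : ∃ d < n, j = i + d := ⟨(j - i).val, ZMod.val_lt _, by simp⟩
  match d, hdn, hd with
  | 0, _, hd => simp [hd] at h₀
  | 1, _, hd => simp [hd] at h₁
  | e + 2, hdn, hd => exact ⟨e, n - e - 3, by rw [hd]; push_cast; ring, by omega⟩

section ListCycle

variable {V : Type*} {G : SimpleGraph V}

lemma exists_isCycleEmb_of_isChain {L : List V} (hlen : 3 ≤ L.length) (hnd : L.Nodup)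
    (hch : L.IsChain G.Adj) {x y : V} (hx : L.head? = some x) (hy : L.getLast? = some y)
    (hyx : G.Adj y x) :
    ∃ g : ZMod L.length → V, IsCycleEmb G L.length g := by
  have : NeZero L.length := ⟨by omega⟩
  refine ⟨fun k => L[k.val]'(ZMod.val_lt k), hlen, fun k l hkl => ?_, fun k => ?_⟩
  · exact ZMod.val_injective _ (Fin.val_eq_of_eq (List.nodup_iff_injective_get.mp hnd hkl))
  obtain ⟨m, hm, rfl⟩ : ∃ m < L.length, k = (m : ZMod L.length) :=
    ⟨k.val, ZMod.val_lt k, (ZMod.natCast_zmod_val k).symm⟩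
  have hsucc : ((m : ZMod L.length) + 1) = ((m + 1 : ℕ) : ZMod L.length) := by push_cast; rfl
  simp only [hsucc, ZMod.val_natCast, Nat.mod_eq_of_lt hm]
  by_cases hlt : m + 1 < L.length
  · simp only [Nat.mod_eq_of_lt hlt]
    exact List.isChain_iff_getElem.mp hch m hlt
  · obtain rfl : m = L.length - 1 := by omega
    rw [List.getLast?_eq_getElem?, List.getElem?_eq_getElem hm, Option.some_inj] at hy
    rw [List.head?_eq_getElem?, List.getElem?_eq_getElem (by omega), Option.some_inj] at hx
    simpa [Nat.sub_add_cancel (show 1 ≤ L.length by omega), hx, hy] using hyx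

theorem IsLongestCycle.length_le_of_closed_chain {n : ℕ} {f : ZMod n → V}
    (hC : IsLongestCycle G n f) {L : List V} (hnd : L.Nodup) (hch : L.IsChain G.Adj)
    {x y : V} (hx : L.head? = some x) (hy : L.getLast? = some y) (hyx : G.Adj y x) :
    L.length ≤ n := by
  by_cases hlen : 3 ≤ L.length
  · obtain ⟨g, hg⟩ := exists_isCycleEmb_of_isChain hlen hnd hch hx hy hyx
    exact hC.2 _ g hg
  · have := hC.1.1
    omega

end ListCycle

section CycleArc

variable {V : Type*} {n : ℕ}

def cycleArc (f : ZMod n → V) (s : ZMod n) (m : ℕ) : List V :=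
  (List.range m).map fun k : ℕ => f (s + (k : ZMod n))

variable (f : ZMod n → V) (s : ZMod n)

@[simp] lemma length_cycleArc (m : ℕ) : (cycleArc f s m).length = m := by
  simp [cycleArc]

lemma cycleArc_add (a b : ℕ) :
    cycleArc f s (a + b) = cycleArc f s a ++ cycleArc f (s + a) b := by
  simp only [cycleArc, List.range_add, List.map_append, List.map_map]
  congr 2
  ext k
  simp [add_assoc]

lemma cycleArc_one : cycleArc f s 1 = [f s] := by
  simp [cycleArc]

@[simp] lemma head?_cycleArc_succ (m : ℕ) : (cycleArc f s (m + 1)).head? = some (f s) := by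
  rw [add_comm, cycleArc_add, cycleArc_one]
  rfl

@[simp] lemma getLast?_cycleArc_succ (m : ℕ) :
    (cycleArc f s (m + 1)).getLast? = some (f (s + m)) := by
  rw [cycleArc_add, cycleArc_one, List.getLast?_append_cons, List.getLast?_singleton]

lemma mem_range_of_mem_cycleArc {m : ℕ} {x : V} (hx : x ∈ cycleArc f s m) :
    x ∈ Set.range f := by
  obtain ⟨k, -, rfl⟩ := List.mem_map.mp hx
  exact ⟨_, rfl⟩

variable {f}

lemma nodup_cycleArc (hf : Function.Injective f) {m : ℕ} (hm : m ≤ n) :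
    (cycleArc f s m).Nodup := by
  refine List.nodup_range.map_on fun k hk l hl hkl => ?_
  rw [List.mem_range] at hk hl
  have := congrArg ZMod.val (add_left_cancel (hf hkl))
  rwa [ZMod.val_natCast_of_lt (by omega), ZMod.val_natCast_of_lt (by omega)] at this

lemma ne_of_mem_cycleArc (hf : Function.Injective f) {t : ZMod n} {a b c : ℕ} (hac : a ≤ c)
    (hcb : c + b ≤ n) (ht : t = s + c) {x y : V} (hx : x ∈ cycleArc f s a)
    (hy : y ∈ cycleArc f t b) : x ≠ y := by
  obtain ⟨k, hk, rfl⟩ := List.mem_map.mp hx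
  obtain ⟨l, hl, rfl⟩ := List.mem_map.mp hy
  rw [List.mem_range] at hk hl
  intro h
  have hkl : ((k : ℕ) : ZMod n) = ((c + l : ℕ) : ZMod n) := by
    push_cast
    exact add_left_cancel ((hf h).trans (by rw [ht, add_assoc]))
  have := congrArg ZMod.val hkl
  rw [ZMod.val_natCast_of_lt (by omega), ZMod.val_natCast_of_lt (by omega)] at this
  omega

lemma isChain_cycleArc {G : SimpleGraph V} (hadj : ∀ t, G.Adj (f t) (f (t + 1))) (m : ℕ) :
    (cycleArc f s m).IsChain G.Adj := by
  refine List.isChain_iff_getElem.mpr fun k hk => ?_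
  simpa [cycleArc, add_assoc] using hadj (s + k)

end CycleArc

section LongestCycle

variable {V : Type*} {G : SimpleGraph V} {n : ℕ} {f : ZMod n → V} {H : Set V}

lemma IsLongestCycle.comp_neg (hC : IsLongestCycle G n f) :
    IsLongestCycle G n fun k => f (-k) := by
  obtain ⟨⟨h3, hinj, hadj⟩, hmax⟩ := hC
  refine ⟨⟨h3, hinj.comp neg_injective, fun k => ?_⟩, hmax⟩
  simpa [neg_add_rev, add_comm] using (hadj (-(k + 1))).symm

theorem IsLongestCycle.not_adj_add_one_of_adj (hC : IsLongestCycle G n f)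
    (hdisj : Disjoint H (Set.range f)) (hconn : (G.induce H).Preconnected) {i : ZMod n}
    {a b : V} (ha : G.Adj (f i) a) (haH : a ∈ H) (hbH : b ∈ H) : ¬ G.Adj (f (i + 1)) b := by
  intro hb
  obtain ⟨P, hPnd, hPch, hPH, hPa, hPb⟩ := hconn.exists_chain_induce haH hbH
  obtain ⟨m, hm⟩ : ∃ m, n = m + 1 := ⟨n - 1, by have := hC.1.1; omega⟩
  have hwrap : i + 1 + (m : ZMod n) = i := by
    rw [ZMod.natCast_eq_neg_of_add_eq hm.symm, Nat.cast_one, add_neg_cancel_right]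
  set F := cycleArc f (i + 1) (m + 1)
  have hFP : ∀ x ∈ F, ∀ y ∈ P, x ≠ y := fun x hx y hy =>
    hdisj.ne_of_mem (hPH y hy) (mem_range_of_mem_cycleArc _ _ hx) |>.symm
  have hlen := hC.length_le_of_closed_chain (L := F ++ P)
    (List.nodup_append.mpr ⟨nodup_cycleArc _ hC.1.2.1 hm.ge, hPnd, hFP⟩)
    (isChain_cycleArc _ hC.1.2.2 _ |>.append hPch (by simp [hwrap, hPa, ha]))
    (by simp [F]) (by simp [hPb]) hb.symm
  have hP : P ≠ [] := by rintro rfl; simp at hPa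
  rw [List.length_append, length_cycleArc] at hlen
  have := List.length_pos_iff.mpr hP
  omega

theorem IsLongestCycle.not_adj_add_two_add_one (hC : IsLongestCycle G n f)
    (hdisj : Disjoint H (Set.range f)) (hconn : (G.induce H).Preconnected) {i j : ZMod n}
    (hij : f i ≠ f j) {a b : V} (ha : G.Adj (f i) a) (haH : a ∈ H) (hb : G.Adj (f j) b)
    (hbH : b ∈ H) (hab : a ≠ b) : ¬ G.Adj (f (i + 2)) (f (j + 1)) := by
  intro hedge
  have : NeZero n := ⟨by have := hC.1.1; omega⟩
  have hji : j ≠ i + 1 := by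
    rintro rfl
    rw [add_assoc, one_add_one_eq_two] at hedge
    exact G.irrefl hedge
  obtain ⟨e, m, hj, hn⟩ := ZMod.exists_eq_add_two_add (fun h => hij (congrArg f h.symm)) hji
  have hwrap : j + 1 + m = i := by
    have := ZMod.natCast_eq_neg_of_add_eq (n := n) (a := m + 1) (b := e + 2) (by omega)
    push_cast at this
    linear_combination hj + this
  obtain ⟨P, hPnd, hPch, hPH, hPa, hPb⟩ := hconn.exists_chain_induce haH hbH
  -- `F` runs from `v⁺` to `u` and `B` from `u⁺²` to `v`, where `u = f i` and `v = f j`.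
  set F := cycleArc f (j + 1) (m + 1)
  set B := cycleArc f (i + 2) (e + 1)
  have hFB : ∀ x ∈ F, ∀ y ∈ B, x ≠ y := fun x hx y hy =>
    ne_of_mem_cycleArc _ hC.1.2.1 (c := m + 2) (by omega) (by omega)
      (by push_cast; linear_combination -hwrap) hx hy
  have hPC {s : ZMod n} {k : ℕ} : ∀ x ∈ P, ∀ y ∈ cycleArc f s k, x ≠ y :=
    fun x hx y hy => hdisj.ne_of_mem (hPH x hx) (mem_range_of_mem_cycleArc _ _ hy)
  have hnd : (F ++ P ++ B.reverse).Nodup := by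
    refine List.nodup_append.mpr ⟨List.nodup_append.mpr
      ⟨nodup_cycleArc _ hC.1.2.1 (by omega), hPnd, ?_⟩,
      List.nodup_reverse.mpr (nodup_cycleArc _ hC.1.2.1 (by omega)), ?_⟩
    · exact fun x hx y hy => (hPC y hy x hx).symm
    · intro x hx y hy
      rw [List.mem_reverse] at hy
      rcases List.mem_append.mp hx with hx | hx
      · exact hFB x hx y hy
      · exact hPC x hx y hy
  have hch : (F ++ P ++ B.reverse).IsChain G.Adj := by
    refine ((isChain_cycleArc _ hC.1.2.2 _).append hPch ?_).append
      (List.isChain_reverse.mpr ((isChain_cycleArc _ hC.1.2.2 _).imp fun _ _ h => h.symm)) ?_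
    · simp [hwrap, hPa, ha]
    · simp [B, hPb, ← hj, hb.symm]
  have hlen := hC.length_le_of_closed_chain hnd hch (by simp [F]) (by simp [B]) hedge
  have := List.two_le_length_of_head?_of_getLast? hPa hPb hab
  simp only [List.length_append, List.length_reverse, length_cycleArc, F, B] at hlen
  omega

end LongestCycle

theorem stmt2_general {V : Type*} (G : SimpleGraph V) (n : ℕ) (f : ZMod n → V)
    (H : Set V) (hC : IsLongestCycle G n f) (hH : IsCompOutside G (Set.range f) H)
    (i j : ZMod n) (hij : f i ≠ f j)
    (hu : (G.neighborSet (f i) ∩ H).Nonempty) (hv : (G.neighborSet (f j) ∩ H).Nonempty)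
    (h2 : 2 ≤ ((G.neighborSet (f i) ∩ H) ∪ (G.neighborSet (f j) ∩ H)).ncard) :
    ¬ G.Adj (f (i + 2)) (f (j + 1)) ∧ ¬ G.Adj (f (i + 1)) (f (j + 2)) ∧
    ¬ G.Adj (f (i - 2)) (f (j - 1)) ∧ ¬ G.Adj (f (i - 1)) (f (j - 2)) ∧
    f (i + 2) ≠ f j ∧ f (i - 2) ≠ f (j - 1) := by
  obtain ⟨a, ⟨ha, haH⟩, b, ⟨hb, hbH⟩, hab⟩ :=
    Set.exists_ne_of_two_le_ncard_union hu hv h2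
  obtain ⟨-, hdisj, hconn, -⟩ := hH
  have hdisj' : Disjoint H (Set.range fun k => f (-k)) := by
    rwa [← Function.comp_def, neg_surjective.range_comp]
  have hconn' := hconn.preconnected
  have h₁ : ¬ G.Adj (f (i + 2)) (f (j + 1)) :=
    hC.not_adj_add_two_add_one hdisj hconn' hij ha haH hb hbH hab
  refine ⟨h₁, fun h => ?_, fun h => ?_, fun h => ?_,
    fun h => h₁ (h ▸ hC.1.2.2 j), fun h => ?_⟩
  · exact hC.not_adj_add_two_add_one hdisj hconn' hij.symm hb hbH ha haH hab.symm h.symm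
  · refine hC.comp_neg.not_adj_add_two_add_one hdisj' hconn' (i := -i) (j := -j)
      (by simpa) (by simpa) haH (by simpa) hbH hab ?_
    simpa [neg_add_eq_sub] using h
  · refine hC.comp_neg.not_adj_add_two_add_one hdisj' hconn' (i := -j) (j := -i)
      (by simpa using hij.symm) (by simpa) hbH (by simpa) haH hab.symm ?_
    simpa [neg_add_eq_sub] using h.symm
  · have hi : i = j + 1 := by linear_combination hC.1.2.1 h
    exact hC.not_adj_add_one_of_adj hdisj hconn' hb hbH haH (by rwa [← hi])

/-- If `u = f i` and `v = f j` are distinct vertices of a longest cycle, each with a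
neighbor in a component `H` of `G - V(C)`, and together they have at least two neighbors
in `H`, then none of `u⁺²v⁺`, `u⁺v⁺²`, `u⁻²v⁻`, `u⁻v⁻²` is an edge; in particular
`u⁺² ≠ v` and `u⁻² ≠ v⁻`. -/
theorem stmt2 {V : Type*} [Fintype V] (G : SimpleGraph V) (n : ℕ) (f : ZMod n → V)
    (H : Set V) (hC : IsLongestCycle G n f) (hH : IsCompOutside G (Set.range f) H)
    (i j : ZMod n) (hij : f i ≠ f j)
    (hu : (G.neighborSet (f i) ∩ H).Nonempty) (hv : (G.neighborSet (f j) ∩ H).Nonempty)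
    (h2 : 2 ≤ ((G.neighborSet (f i) ∩ H) ∪ (G.neighborSet (f j) ∩ H)).ncard) :
    ¬ G.Adj (f (i + 2)) (f (j + 1)) ∧ ¬ G.Adj (f (i + 1)) (f (j + 2)) ∧
    ¬ G.Adj (f (i - 2)) (f (j - 1)) ∧ ¬ G.Adj (f (i - 1)) (f (j - 2)) ∧
    f (i + 2) ≠ f j ∧ f (i - 2) ≠ f (j - 1) :=
  stmt2_general G n f H hC hH i j hij hu hv h2
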